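/- Let π = a_1...a_n be a sequence of real numbers with a_i > a_{i+1} for some i, and let π̄ be π with a_i and a_{i+1} swapped. Set d = a_i − a_{i+1} > 0. Then dinv_m(π̄) ≤ dinv_m(π); moreover if 0 < d ≤ m then dinv_m(π) − dinv_m(π̄) = 1, and if d > m then dinv_m(π) = dinv_m(π̄). -/

import Mathlib

/-!
Swapping the entries at positions `i, i + 1` permutes the index pairs `p < q` other than
`(i, i + 1)` and keeps their value differences, so for every `k` only the pair `(i, i + 1)`
can change its contribution. Summed over `k`, that pair contributes
`#{k < m | 0 ≤ x + k ≤ m}` with `x = d` before the swap and `x = -d` after it; for `d > 0`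
these counts are `m + 1 - ⌈d⌉` and `m - ⌈d⌉` (truncated at `0`).
-/

open scoped Classical

noncomputable def dinvm (m n : ℕ) (a : ℕ → ℝ) : ℕ :=
  ∑ k ∈ Finset.range m,
    (((Finset.range n) ×ˢ (Finset.range n)).filter
      (fun p => p.1 < p.2 ∧ 0 ≤ a p.1 - a p.2 + k ∧ a p.1 - a p.2 + k ≤ m)).card

open Finset Equiv

section AdjacentSwap

variable {α : Type*} (n : ℕ) (r : α → α → Prop) [DecidableRel r]

def pairsWith (b : ℕ → α) : Finset (ℕ × ℕ) :=
  {p ∈ range n ×ˢ range n | p.1 < p.2 ∧ r (b p.1) (b p.2)}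

variable {n r}

lemma mem_pairsWith {b : ℕ → α} {p : ℕ × ℕ} :
    p ∈ pairsWith n r b ↔ p.1 < n ∧ p.2 < n ∧ p.1 < p.2 ∧ r (b p.1) (b p.2) := by
  simp [pairsWith, and_assoc]

lemma swap_lt_swap_of_lt {i x y : ℕ} (h : x < y) (hne : (x, y) ≠ (i, i + 1)) :
    swap i (i + 1) x < swap i (i + 1) y := by
  simp only [ne_eq, Prod.mk.injEq] at hne
  simp only [swap_apply_def]
  split_ifs <;> omega

lemma swap_lt_of_lt {i x n : ℕ} (hi : i + 1 < n) (hx : x < n) : swap i (i + 1) x < n := by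
  simp only [swap_apply_def]
  split_ifs <;> omega

lemma swap_mapsTo_erase_pairsWith {i : ℕ} (hi : i + 1 < n) (b : ℕ → α) :
    Set.MapsTo (fun p : ℕ × ℕ => (swap i (i + 1) p.1, swap i (i + 1) p.2))
      ((pairsWith n r (b ∘ swap i (i + 1))).erase (i, i + 1))
      ((pairsWith n r b).erase (i, i + 1)) := by
  intro p hp
  simp only [coe_erase, Set.mem_sdiff, mem_coe, Set.mem_singleton_iff, mem_pairsWith,
    Function.comp_apply] at hp ⊢
  obtain ⟨⟨h1, h2, hlt, hr⟩, hne⟩ := hp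
  refine ⟨⟨swap_lt_of_lt hi h1, swap_lt_of_lt hi h2, swap_lt_swap_of_lt hlt hne, hr⟩, ?_⟩
  intro h
  simp only [Prod.mk.injEq, swap_apply_eq_iff, swap_apply_left, swap_apply_right] at h
  omega

lemma card_erase_pairsWith_comp_swap {i : ℕ} (hi : i + 1 < n) (b : ℕ → α) :
    #((pairsWith n r (b ∘ swap i (i + 1))).erase (i, i + 1))
      = #((pairsWith n r b).erase (i, i + 1)) := by
  have hback := swap_mapsTo_erase_pairsWith (r := r) hi (b ∘ swap i (i + 1))
  simp only [Function.comp_def, swap_apply_self] at hback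
  exact card_nbij' _ _ (swap_mapsTo_erase_pairsWith hi b) hback
    (fun p _ => by simp) (fun p _ => by simp)

lemma card_pairsWith_eq_card_erase_add {i : ℕ} (hi : i + 1 < n) (b : ℕ → α) :
    #(pairsWith n r b) = #((pairsWith n r b).erase (i, i + 1))
      + if r (b i) (b (i + 1)) then 1 else 0 := by
  have hmem : (i, i + 1) ∈ pairsWith n r b ↔ r (b i) (b (i + 1)) := by
    simp only [mem_pairsWith]
    exact ⟨fun h => h.2.2.2, fun h => ⟨by omega, hi, by omega, h⟩⟩
  split_ifs with h
  · exact (card_erase_add_one (hmem.2 h)).symm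
  · rw [erase_eq_of_notMem (mt hmem.1 h), add_zero]

theorem card_pairsWith_comp_swap_add {i : ℕ} (hi : i + 1 < n) (b : ℕ → α) :
    #(pairsWith n r (b ∘ swap i (i + 1))) + (if r (b i) (b (i + 1)) then 1 else 0)
      = #(pairsWith n r b) + if r (b (i + 1)) (b i) then 1 else 0 := by
  rw [card_pairsWith_eq_card_erase_add hi, card_pairsWith_eq_card_erase_add hi b,
    card_erase_pairsWith_comp_swap hi]
  simp only [Function.comp_apply, swap_apply_left, swap_apply_right]
  ring

end AdjacentSwap

/-- The weight `f_m(x)` of the paper when `x` is an integer. -/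
noncomputable def dinvWeight (m : ℕ) (x : ℝ) : ℕ :=
  #((range m).filter fun k : ℕ => 0 ≤ x + k ∧ x + k ≤ m)

lemma dinvm_eq_sum_card_pairsWith (m n : ℕ) (a : ℕ → ℝ) :
    dinvm m n a = ∑ k ∈ range m,
      #(pairsWith n (fun x y : ℝ => 0 ≤ x - y + k ∧ x - y + k ≤ m) a) := rfl

lemma dinvWeight_sub_eq_sum (m : ℕ) (x y : ℝ) :
    dinvWeight m (x - y) = ∑ k ∈ range m,
      if 0 ≤ x - y + k ∧ x - y + k ≤ m then 1 else 0 := card_filter _ _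

theorem dinvm_comp_swap_add {i n : ℕ} (hi : i + 1 < n) (m : ℕ) (a : ℕ → ℝ) :
    dinvm m n (a ∘ swap i (i + 1)) + dinvWeight m (a i - a (i + 1))
      = dinvm m n a + dinvWeight m (a (i + 1) - a i) := by
  rw [dinvm_eq_sum_card_pairsWith, dinvm_eq_sum_card_pairsWith, dinvWeight_sub_eq_sum,
    dinvWeight_sub_eq_sum, ← sum_add_distrib, ← sum_add_distrib]
  exact sum_congr rfl fun k _ => card_pairsWith_comp_swap_add hi a

lemma dinvWeight_of_pos {d : ℝ} (hd : 0 < d) (m : ℕ) : dinvWeight m d = m + 1 - ⌈d⌉₊ := by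
  have hceil : 1 ≤ ⌈d⌉₊ := Nat.one_le_iff_ne_zero.2 (Nat.ceil_pos.2 hd).ne'
  have hle (k : ℕ) : d + k ≤ m ↔ ⌈d⌉₊ + k ≤ m := by
    rw [← Nat.ceil_add_natCast hd.le, Nat.ceil_le]
  have : (range m).filter (fun k : ℕ => 0 ≤ d + k ∧ d + k ≤ m) = range (m + 1 - ⌈d⌉₊) := by
    ext k
    simp only [mem_filter, mem_range, hle, add_nonneg hd.le (Nat.cast_nonneg k), true_and]
    omega
  rw [dinvWeight, this, card_range]

lemma dinvWeight_neg {d : ℝ} (hd : 0 < d) (m : ℕ) : dinvWeight m (-d) = m - ⌈d⌉₊ := by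
  have : (range m).filter (fun k : ℕ => 0 ≤ -d + k ∧ -d + k ≤ m) = Ico ⌈d⌉₊ m := by
    ext k
    simp only [mem_filter, mem_range, mem_Ico, Nat.ceil_le]
    constructor
    · rintro ⟨hk, h0, -⟩
      exact ⟨by linarith, hk⟩
    · rintro ⟨h0, hk⟩
      have : (k : ℝ) < m := by exact_mod_cast hk
      exact ⟨hk, by linarith, by linarith⟩
  rw [dinvWeight, this, Nat.card_Ico]

theorem dinv_adjacent_swap_general (m n i : ℕ) (a : ℕ → ℝ)
    (hi : i + 1 < n) (hdesc : a (i + 1) < a i)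
    (abar : ℕ → ℝ)
    (habar : abar = fun j => if j = i then a (i + 1) else if j = i + 1 then a i else a j) :
    dinvm m n abar ≤ dinvm m n a ∧
    (a i - a (i + 1) ≤ (m : ℝ) → dinvm m n a = dinvm m n abar + 1) ∧
    ((m : ℝ) < a i - a (i + 1) → dinvm m n a = dinvm m n abar) := by
  have habar_eq : abar = a ∘ swap i (i + 1) := by
    funext j
    simp only [habar, Function.comp_apply, swap_apply_def]
    split_ifs <;> rfl
  have hd : 0 < a i - a (i + 1) := sub_pos.2 hdesc
  have hswap := dinvm_comp_swap_add hi m a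
  rw [← habar_eq, ← neg_sub (a i) (a (i + 1)), dinvWeight_of_pos hd, dinvWeight_neg hd] at hswap
  have hceil_le : ⌈a i - a (i + 1)⌉₊ ≤ m ↔ a i - a (i + 1) ≤ m := Nat.ceil_le
  refine ⟨by omega, fun h => ?_, fun h => ?_⟩
  · have := hceil_le.2 h
    omega
  · have := hceil_le.not.2 h.not_ge
    omega

/-- Swapping an adjacent descent weakly decreases `dinv_m`: if `a_i > a_{i+1}` and
`π̄` is `π` with positions `i, i+1` swapped, then `dinv_m(π̄) ≤ dinv_m(π)`; if
`0 < d = a_i − a_{i+1} ≤ m` then `dinv_m(π) − dinv_m(π̄) = 1`, and if `d > m` then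
`dinv_m(π) = dinv_m(π̄)`. -/
theorem dinv_adjacent_swap (m n i : ℕ) (hm : 0 < m) (a : ℕ → ℝ)
    (hi : i + 1 < n) (hdesc : a (i + 1) < a i)
    (abar : ℕ → ℝ)
    (habar : abar = fun j => if j = i then a (i + 1) else if j = i + 1 then a i else a j) :
    dinvm m n abar ≤ dinvm m n a ∧
    (a i - a (i + 1) ≤ (m : ℝ) → dinvm m n a = dinvm m n abar + 1) ∧
    ((m : ℝ) < a i - a (i + 1) → dinvm m n a = dinvm m n abar) :=
  dinv_adjacent_swap_general m n i a hi hdesc abar habar
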